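/- arXiv:0910.4789 — 2 statements merged into one kernel-verified Lean document; each statement's English description precedes it below -/
import Mathlib

section
/- Let Γ be the graph on the three vertices a, b, c with the single edge joining a and b, so A_Γ = ⟨a, b, c | ab = ba⟩. Let α, β, γ ∈ Aut(A_Γ) be the automorphisms determined by α: c ↦ ca (fixing a, b), β: c ↦ cb (fixing a and b), and γ = τ_{a,b}τ_{b,a}, the composite of the automorphism sending b ↦ ba (fixing a, c) with the automorphism sending a ↦ ab (fixing b, c). Let G be the subgroup of Out(A_Γ) generated by the images of α, β, γ. Then G is isomorphic to the semidirect product ℤ² ⋊ ℤ in which a generator of ℤ acts on ℤ² by the matrix [[2,1],[1,1]]; in particular G is solvable and G is not virtually nilpotent. -/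
open SimpleGraph
open scoped commutatorElement

variable {V : Type*}

/-- The link of a vertex: the set of adjacent vertices. -/
def lk (G : SimpleGraph V) (x : V) : Set V := {z | G.Adj x z}

/-- The star of a vertex: the link together with the vertex itself. -/
def st (G : SimpleGraph V) (x : V) : Set V := insert x (lk G x)

/-- `Dominates G y x` means `y ≥ x`, i.e. `lk x ⊆ st y`. -/
def Dominates (G : SimpleGraph V) (y x : V) : Prop := lk G x ⊆ st G y

/-- `Γ` contains a domination-equivalent pair of (distinct) vertices. -/
def DomEquivPair (G : SimpleGraph V) : Prop :=
  ∃ x y : V, x ≠ y ∧ Dominates G x y ∧ Dominates G y x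

/-- `S` separates `u` from `v`: both lie outside `S` and they are not joined by a path
in the induced subgraph on the complement of `S`. -/
def SeparatesFrom (G : SimpleGraph V) (S : Set V) (u v : V) : Prop :=
  ∃ (hu : u ∈ Sᶜ) (hv : v ∈ Sᶜ),
    ¬ (G.induce Sᶜ).Reachable ⟨u, hu⟩ ⟨v, hv⟩

/-- `Γ` has a separating intersection of links: there are distinct non-adjacent vertices
`x, y` and a vertex `z` whose connected component in the induced subgraph on the
complement of `lk x ∩ lk y` contains neither `x` nor `y`. -/
def SepIntLinks (G : SimpleGraph V) : Prop :=
  ∃ x y : V, x ≠ y ∧ ¬ G.Adj x y ∧ ∃ z : V,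
    SeparatesFrom G (lk G x ∩ lk G y) z x ∧ SeparatesFrom G (lk G x ∩ lk G y) z y

/-- `Y` is the vertex set of a connected component of the induced subgraph on `S`. -/
def IsCompOf (G : SimpleGraph V) (S : Set V) (Y : Set V) : Prop :=
  Y.Nonempty ∧ Y ⊆ S ∧
    ∀ a : S, a.1 ∈ Y → ∀ b : S, ((G.induce S).Reachable a b ↔ b.1 ∈ Y)

/-- The defining relators of the right-angled Artin group of `G`. -/
def raagRels (G : SimpleGraph V) : Set (FreeGroup V) :=
  {r | ∃ x y : V, G.Adj x y ∧ r = ⁅FreeGroup.of x, FreeGroup.of y⁆}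

/-- The right-angled Artin group of a graph. -/
abbrev RAAG (G : SimpleGraph V) : Type _ := PresentedGroup (raagRels G)

/-- The generator of the RAAG corresponding to a vertex. -/
def gen (G : SimpleGraph V) (x : V) : RAAG G := PresentedGroup.of x

/-- The subgroup of inner automorphisms. -/
def Inn (H : Type*) [Group H] : Subgroup (MulAut H) := (MulAut.conj : H →* MulAut H).range

instance Inn.normal (H : Type*) [Group H] : (Inn H).Normal := by
  constructor
  intro n hn g
  obtain ⟨h, rfl⟩ := hn
  refine ⟨g h, ?_⟩
  ext x
  simp [MulAut.conj]

/-- The outer automorphism group `Out(A_Γ)` of the RAAG of `G`. -/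
abbrev OutG (G : SimpleGraph V) := MulAut (RAAG G) ⧸ Inn (RAAG G)

/-- A group contains a subgroup isomorphic to the free group of rank 2. -/
def HasFreeRankTwo (H : Type*) [Group H] : Prop :=
  ∃ K : Subgroup H, Nonempty (↥K ≃* FreeGroup (Fin 2))

/-- A group is virtually nilpotent. -/
def VirtNilpotent (H : Type*) [Group H] : Prop :=
  ∃ K : Subgroup H, K.FiniteIndex ∧ Group.IsNilpotent ↥K

/-- `φ` is a transvection with multiplier `x^ε` acting on the generator `y`
(either a right or a left transvection). -/
def IsTransvection (G : SimpleGraph V) (φ : MulAut (RAAG G)) (x y : V) (ε : ℤ) : Prop :=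
  x ≠ y ∧ Dominates G x y ∧ (ε = 1 ∨ ε = -1) ∧
  (φ (gen G y) = gen G y * (gen G x) ^ ε ∨ φ (gen G y) = (gen G x) ^ ε * gen G y) ∧
  ∀ z : V, z ≠ y → φ (gen G z) = gen G z

/-- `φ` is a non-inner partial conjugation with multiplier `x^ε`, conjugating exactly the
generators in the connected component `Y` of the complement of `st x`. -/
def IsPartialConj (G : SimpleGraph V) (φ : MulAut (RAAG G)) (x : V) (ε : ℤ) (Y : Set V) : Prop :=
  (ε = 1 ∨ ε = -1) ∧ IsCompOf G ((st G x)ᶜ) Y ∧ ((st G x ∪ Y)ᶜ).Nonempty ∧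
  (∀ y ∈ Y, φ (gen G y) = (gen G x) ^ (-ε) * gen G y * (gen G x) ^ ε) ∧
  ∀ z : V, z ∉ Y → φ (gen G z) = gen G z

/-- A domination chain, listed with the dominant member first. -/
def IsDomChain (G : SimpleGraph V) (l : List V) : Prop :=
  l ≠ [] ∧ l.Nodup ∧ l.Chain' (fun a b => Dominates G a b)

/-- The domination depth of a vertex: the maximal length of a domination chain with
top member `x`. -/
noncomputable def domDepth (G : SimpleGraph V) (x : V) : ℕ :=
  sSup {n | ∃ l : List V, IsDomChain G l ∧ l.head? = some x ∧ l.length = n + 1}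

/-- A star-separation preserving domination chain with top member `xm` and
bottom member `x1`. -/
def IsSSPChain (G : SimpleGraph V) (l : List V) (xm x1 : V) : Prop :=
  IsDomChain G l ∧ l.head? = some xm ∧ l.getLast? = some x1 ∧
  ∃ Y1 Y2 : Set V, IsCompOf G ((st G x1)ᶜ) Y1 ∧ IsCompOf G ((st G x1)ᶜ) Y2 ∧
    Y1 ≠ Y2 ∧ ¬ Y1 ⊆ st G xm ∧ ¬ Y2 ⊆ st G xm

/-- The star-separation depth of a vertex: `1 +` the maximal length of a star-separation
preserving chain with top member `x` (this is `0` if there is no such chain, as then the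
set below is empty). -/
noncomputable def ssDepth (G : SimpleGraph V) (x : V) : ℕ :=
  sSup {n | ∃ (l : List V) (x1 : V), IsSSPChain G l x x1 ∧ l.length = n}

/-- The depth of a vertex. -/
noncomputable def vdepth (G : SimpleGraph V) (x : V) : ℕ := max (domDepth G x) (ssDepth G x)

/-- The depth of the graph `G`. -/
noncomputable def gdepth (G : SimpleGraph V) : ℕ := sSup {n | ∃ x : V, n = vdepth G x}

/-- The set of images in `Out(A_Γ)` of all transvections and all non-inner partial
conjugations. -/
def TvPcSet (G : SimpleGraph V) : Set (OutG G) :=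
  {g | ∃ φ : MulAut (RAAG G), (QuotientGroup.mk φ : OutG G) = g ∧
    ((∃ x y ε, IsTransvection G φ x y ε) ∨ (∃ x ε Y, IsPartialConj G φ x ε Y))}

/-- The subgroup `N` of `Out(A_Γ)` generated by the images of all transvections and
all non-inner partial conjugations. -/
def Ngrp (G : SimpleGraph V) : Subgroup (OutG G) := Subgroup.closure (TvPcSet G)
/-- The automorphism of `ℤ²` given by the matrix `[[2,1],[1,1]]`. -/
def matAut : (ℤ × ℤ) ≃+ (ℤ × ℤ) where
  toFun p := (2 * p.1 + p.2, p.1 + p.2)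
  invFun p := (p.1 - p.2, -p.1 + 2 * p.2)
  left_inv := fun ⟨a, b⟩ => by
    simp only [Prod.mk.injEq]
    constructor <;> ring
  right_inv := fun ⟨a, b⟩ => by
    simp only [Prod.mk.injEq]
    constructor <;> ring
  map_add' p q := by
    simp only [Prod.fst_add, Prod.snd_add, Prod.mk.injEq, Prod.mk_add_mk]
    constructor <;> ring

/-- The action of `ℤ` on `ℤ²` by powers of the matrix `[[2,1],[1,1]]`. -/
def φSol : Multiplicative ℤ →* MulAut (Multiplicative (ℤ × ℤ)) :=
  zpowersHom _ (AddEquiv.toMultiplicative matAut)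

/-- The semidirect product `ℤ² ⋊ ℤ`, where a generator of `ℤ` acts on `ℤ²` by the
matrix `[[2,1],[1,1]]`. -/
abbrev Sol : Type := SemidirectProduct (Multiplicative (ℤ × ℤ)) (Multiplicative ℤ) φSol


/-- The graph on three vertices `a = 0`, `b = 1`, `c = 2` with the single edge
joining `a` and `b`. -/
def Gabc : SimpleGraph (Fin 3) :=
  SimpleGraph.fromRel (fun u v => u = 0 ∧ v = 1)


namespace Stmt18Aux

open Multiplicative SemidirectProduct

instance aautGroup {A : Type*} [Add A] : Group (AddAut A) where
  mul g h := AddEquiv.trans h g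
  one := AddEquiv.refl _
  inv := AddEquiv.symm
  mul_assoc _ _ _ := rfl
  one_mul _ := rfl
  mul_one _ := rfl
  inv_mul_cancel := AddEquiv.self_trans_symm

lemma aaut_mul_apply {A : Type*} [Add A] (e₁ e₂ : AddAut A) (m : A) :
    (e₁ * e₂) m = e₁ (e₂ m) := rfl

@[simp] lemma aaut_one_apply {A : Type*} [Add A] (m : A) : (1 : AddAut A) m = m := rfl

/-! ### Basic facts about the RAAG of `Gabc` -/

lemma adj01 : Gabc.Adj 0 1 := by
  rw [Gabc, SimpleGraph.fromRel_adj]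
  exact ⟨by decide, Or.inl ⟨rfl, rfl⟩⟩

lemma comm01 : gen Gabc 0 * gen Gabc 1 = gen Gabc 1 * gen Gabc 0 := by
  have hmem : (⁅FreeGroup.of (0 : Fin 3), FreeGroup.of 1⁆ : FreeGroup (Fin 3)) ∈
      raagRels Gabc := ⟨0, 1, adj01, rfl⟩
  have h1 : (QuotientGroup.mk' (Subgroup.normalClosure (raagRels Gabc)))
      ⁅FreeGroup.of (0 : Fin 3), FreeGroup.of 1⁆ = 1 := by
    rw [QuotientGroup.mk'_apply, QuotientGroup.eq_one_iff]
    exact Subgroup.subset_normalClosure hmem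
  rw [map_commutatorElement] at h1
  exact commutatorElement_eq_one_iff_mul_comm.mp h1

lemma hom_ext {H : Type*} [Group H] {f g : RAAG Gabc →* H}
    (h : ∀ x, f (gen Gabc x) = g (gen Gabc x)) : f = g :=
  PresentedGroup.ext h

lemma aut_ext {φ ψ : MulAut (RAAG Gabc)}
    (h : ∀ x, φ (gen Gabc x) = ψ (gen Gabc x)) : φ = ψ :=
  MulEquiv.toMonoidHom_injective (hom_ext h)

/-! ### The abelianization map `π` -/

def πgen : Fin 3 → Multiplicative ((ℤ × ℤ) × ℤ) :=
  ![ofAdd ((1, 0), 0), ofAdd ((0, 1), 0), ofAdd ((0, 0), 1)]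

def πm : RAAG Gabc →* Multiplicative ((ℤ × ℤ) × ℤ) :=
  PresentedGroup.toGroup (f := πgen) (by
    rintro r ⟨x, y, hxy, rfl⟩
    rw [map_commutatorElement]
    exact commutatorElement_eq_one_iff_mul_comm.mpr (mul_comm _ _))

lemma πm_gen (x : Fin 3) : πm (gen Gabc x) = πgen x :=
  PresentedGroup.toGroup.of _

/-! ### Automorphisms of the abelianization -/

def Lα : AddAut ((ℤ × ℤ) × ℤ) where
  toFun v := ((v.1.1 + v.2, v.1.2), v.2)
  invFun v := ((v.1.1 - v.2, v.1.2), v.2)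
  left_inv := fun ⟨⟨a, b⟩, c⟩ => by simp
  right_inv := fun ⟨⟨a, b⟩, c⟩ => by simp
  map_add' p q := by simp [Prod.ext_iff]; ring

def Lβ : AddAut ((ℤ × ℤ) × ℤ) where
  toFun v := ((v.1.1, v.1.2 + v.2), v.2)
  invFun v := ((v.1.1, v.1.2 - v.2), v.2)
  left_inv := fun ⟨⟨a, b⟩, c⟩ => by simp
  right_inv := fun ⟨⟨a, b⟩, c⟩ => by simp
  map_add' p q := by simp [Prod.ext_iff]; ring

def Lγ : AddAut ((ℤ × ℤ) × ℤ) := AddEquiv.prodCongr matAut (AddEquiv.refl ℤ)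

lemma Lα_apply (v : (ℤ × ℤ) × ℤ) : Lα v = ((v.1.1 + v.2, v.1.2), v.2) := rfl
lemma Lβ_apply (v : (ℤ × ℤ) × ℤ) : Lβ v = ((v.1.1, v.1.2 + v.2), v.2) := rfl
lemma Lγ_apply (v : (ℤ × ℤ) × ℤ) : Lγ v = (matAut v.1, v.2) := rfl

lemma Lα_inv_apply (v : (ℤ × ℤ) × ℤ) : Lα⁻¹ v = ((v.1.1 - v.2, v.1.2), v.2) := rfl
lemma Lβ_inv_apply (v : (ℤ × ℤ) × ℤ) : Lβ⁻¹ v = ((v.1.1, v.1.2 - v.2), v.2) := rfl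
lemma Lγ_inv_apply (v : (ℤ × ℤ) × ℤ) : Lγ⁻¹ v = (matAut.symm v.1, v.2) := rfl

lemma Lα_zpow (p : ℤ) : ∀ v : (ℤ × ℤ) × ℤ,
    (Lα ^ p) v = ((v.1.1 + p * v.2, v.1.2), v.2) := by
  induction p using Int.induction_on with
  | zero => intro v; simp [Prod.ext_iff]
  | succ n ih =>
      intro v
      rw [zpow_add_one, aaut_mul_apply, ih, Lα_apply]
      simp [Prod.ext_iff]; ring
  | pred n ih =>
      intro v
      rw [zpow_sub_one, aaut_mul_apply, ih, Lα_inv_apply]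
      simp [Prod.ext_iff]; ring

lemma Lβ_zpow (q : ℤ) : ∀ v : (ℤ × ℤ) × ℤ,
    (Lβ ^ q) v = ((v.1.1, v.1.2 + q * v.2), v.2) := by
  induction q using Int.induction_on with
  | zero => intro v; simp [Prod.ext_iff]
  | succ n ih =>
      intro v
      rw [zpow_add_one, aaut_mul_apply, ih, Lβ_apply]
      simp [Prod.ext_iff]; ring
  | pred n ih =>
      intro v
      rw [zpow_sub_one, aaut_mul_apply, ih, Lβ_inv_apply]
      simp [Prod.ext_iff]; ring

lemma Lγ_zpow (k : ℤ) : ∀ v : (ℤ × ℤ) × ℤ,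
    (Lγ ^ k) v = (((matAut : AddAut (ℤ × ℤ)) ^ k) v.1, v.2) := by
  induction k using Int.induction_on with
  | zero => intro v; simp [Prod.ext_iff]
  | succ n ih =>
      intro v
      rw [zpow_add_one, aaut_mul_apply, ih, zpow_add_one, aaut_mul_apply]
      rfl
  | pred n ih =>
      intro v
      rw [zpow_sub_one, aaut_mul_apply, ih, zpow_sub_one, aaut_mul_apply]
      rfl

/-! ### Tracking automorphisms on the abelianization -/

def Rel (φ : MulAut (RAAG Gabc)) (L : AddAut ((ℤ × ℤ) × ℤ)) : Prop :=
  ∀ x : RAAG Gabc, Multiplicative.toAdd (πm (φ x)) = L (Multiplicative.toAdd (πm x))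

lemma Rel.mul {φ ψ : MulAut (RAAG Gabc)} {L M : AddAut ((ℤ × ℤ) × ℤ)}
    (h1 : Rel φ L) (h2 : Rel ψ M) : Rel (φ * ψ) (L * M) := fun x => by
  have : (φ * ψ) x = φ (ψ x) := rfl
  rw [this, h1, h2]; rfl

lemma Rel.inv {φ : MulAut (RAAG Gabc)} {L : AddAut ((ℤ × ℤ) × ℤ)}
    (h : Rel φ L) : Rel φ⁻¹ L⁻¹ := fun x => by
  apply L.injective
  have := h (φ⁻¹ x)
  rw [show φ (φ⁻¹ x) = x from MulEquiv.apply_symm_apply φ x] at this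
  rw [← this]
  exact (AddEquiv.apply_symm_apply L _).symm

lemma Rel.one : Rel 1 1 := fun x => rfl

lemma Rel.pow {φ : MulAut (RAAG Gabc)} {L : AddAut ((ℤ × ℤ) × ℤ)}
    (h : Rel φ L) (n : ℕ) : Rel (φ ^ n) (L ^ n) := by
  induction n with
  | zero => simpa using Rel.one
  | succ m ih => rw [pow_succ, pow_succ]; exact ih.mul h

lemma Rel.zpow {φ : MulAut (RAAG Gabc)} {L : AddAut ((ℤ × ℤ) × ℤ)}
    (h : Rel φ L) (k : ℤ) : Rel (φ ^ k) (L ^ k) := by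
  rcases k with n | n
  · rw [Int.ofNat_eq_coe, zpow_natCast, zpow_natCast]; exact h.pow n
  · rw [Int.negSucc_eq, zpow_neg, zpow_neg]
    rw [show ((n : ℤ) + 1) = ((n + 1 : ℕ) : ℤ) by push_cast; ring, zpow_natCast, zpow_natCast]
    exact (h.pow (n + 1)).inv

lemma rel_of_gens (φ : MulAut (RAAG Gabc)) (L : AddAut ((ℤ × ℤ) × ℤ))
    (h : ∀ x : Fin 3, πm (φ (gen Gabc x)) = ofAdd (L (toAdd (πgen x)))) : Rel φ L := by
  have key : πm.comp φ.toMonoidHom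
      = (AddMonoidHom.toMultiplicative L.toAddMonoidHom).comp πm := by
    apply hom_ext
    intro x
    simp only [MonoidHom.comp_apply, MulEquiv.coe_toMonoidHom, πm_gen]
    rw [h x]
    rfl
  intro x
  have := DFunLike.congr_fun key x
  simp only [MonoidHom.comp_apply, MulEquiv.coe_toMonoidHom] at this
  rw [this]
  rfl

lemma rel_alpha {α : MulAut (RAAG Gabc)}
    (hαc : α (gen Gabc 2) = gen Gabc 2 * gen Gabc 0)
    (hαa : α (gen Gabc 0) = gen Gabc 0) (hαb : α (gen Gabc 1) = gen Gabc 1) :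
    Rel α Lα := by
  apply rel_of_gens
  intro x
  fin_cases x
  · show πm (α (gen Gabc 0)) = ofAdd (Lα (toAdd (πgen 0)))
    rw [hαa]; rw [πm_gen]; rfl
  · show πm (α (gen Gabc 1)) = ofAdd (Lα (toAdd (πgen 1)))
    rw [hαb]; rw [πm_gen]; rfl
  · show πm (α (gen Gabc 2)) = ofAdd (Lα (toAdd (πgen 2)))
    rw [hαc, map_mul, πm_gen, πm_gen]; rfl

lemma rel_beta {β : MulAut (RAAG Gabc)}
    (hβc : β (gen Gabc 2) = gen Gabc 2 * gen Gabc 1)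
    (hβa : β (gen Gabc 0) = gen Gabc 0) (hβb : β (gen Gabc 1) = gen Gabc 1) :
    Rel β Lβ := by
  apply rel_of_gens
  intro x
  fin_cases x
  · show πm (β (gen Gabc 0)) = ofAdd (Lβ (toAdd (πgen 0)))
    rw [hβa]; rw [πm_gen]; rfl
  · show πm (β (gen Gabc 1)) = ofAdd (Lβ (toAdd (πgen 1)))
    rw [hβb]; rw [πm_gen]; rfl
  · show πm (β (gen Gabc 2)) = ofAdd (Lβ (toAdd (πgen 2)))
    rw [hβc, map_mul, πm_gen, πm_gen]; rfl

lemma rel_gamma {γ : MulAut (RAAG Gabc)}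
    (hγa : γ (gen Gabc 0) = gen Gabc 0 * gen Gabc 1 * gen Gabc 0)
    (hγb : γ (gen Gabc 1) = gen Gabc 1 * gen Gabc 0)
    (hγc : γ (gen Gabc 2) = gen Gabc 2) :
    Rel γ Lγ := by
  apply rel_of_gens
  intro x
  fin_cases x
  · show πm (γ (gen Gabc 0)) = ofAdd (Lγ (toAdd (πgen 0)))
    rw [hγa, map_mul, map_mul, πm_gen, πm_gen]; rfl
  · show πm (γ (gen Gabc 1)) = ofAdd (Lγ (toAdd (πgen 1)))
    rw [hγb, map_mul, πm_gen, πm_gen]; rfl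
  · show πm (γ (gen Gabc 2)) = ofAdd (Lγ (toAdd (πgen 2)))
    rw [hγc]; rw [πm_gen]; rfl

/-! ### Powers of the multiplicative version of `matAut` -/

lemma T_zpow (k : ℤ) : ∀ w : ℤ × ℤ,
    ((AddEquiv.toMultiplicative matAut : MulAut (Multiplicative (ℤ × ℤ))) ^ k) (ofAdd w)
      = ofAdd (((matAut : AddAut (ℤ × ℤ)) ^ k) w) := by
  induction k using Int.induction_on with
  | zero => intro w; simp
  | succ n ih =>
      intro w
      rw [zpow_add_one, MulAut.mul_apply,
        show (AddEquiv.toMultiplicative matAut : MulAut (Multiplicative (ℤ × ℤ))) (ofAdd w)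
          = ofAdd (matAut w) from rfl, ih, zpow_add_one, aaut_mul_apply]
  | pred n ih =>
      intro w
      rw [zpow_sub_one, MulAut.mul_apply,
        show ((AddEquiv.toMultiplicative matAut : MulAut (Multiplicative (ℤ × ℤ))))⁻¹ (ofAdd w)
          = ofAdd (matAut.symm w) from rfl, ih, zpow_sub_one, aaut_mul_apply]
      rfl

/-! ### Powers of `matAut` have no nonzero fixed vectors -/

lemma matAut_pow_form (k : ℕ) (hk : 1 ≤ k) :
    ∃ a b c : ℤ, a = b + c ∧ 1 ≤ b ∧ 1 ≤ c ∧ a * c - b * b = 1 ∧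
      ∀ p q : ℤ, ((matAut : AddAut (ℤ × ℤ)) ^ k) (p, q) = (a * p + b * q, b * p + c * q) := by
  induction k with
  | zero => omega
  | succ n ih =>
    rcases Nat.eq_or_lt_of_le hk with h1 | h1
    · refine ⟨2, 1, 1, by ring, le_refl _, le_refl _, by ring, fun p q => ?_⟩
      have : (n : ℕ) = 0 := by omega
      subst this
      show matAut (p,q) = _
      simp only [matAut, AddEquiv.coe_mk, Equiv.coe_fn_mk]
      rw [Prod.ext_iff]
      constructor <;> ring
    · obtain ⟨a, b, c, hbc, hb, hc, hdet, hf⟩ := ih (by omega)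
      refine ⟨2 * a + b, a + b, a, by ring, by omega, by omega, by nlinarith, fun p q => ?_⟩
      have : ((matAut : AddAut (ℤ × ℤ)) ^ (n + 1)) (p, q)
          = ((matAut : AddAut (ℤ × ℤ)) ^ n) (matAut (p, q)) := by
        rw [pow_succ]
        rfl
      rw [this]
      show ((matAut : AddAut (ℤ × ℤ)) ^ n) (2 * p + q, p + q) = _
      rw [hf]
      subst hbc
      rw [Prod.ext_iff]
      constructor <;> (simp only []; ring)

lemma matAut_pow_fix {k : ℕ} (hk : 1 ≤ k) {v : ℤ × ℤ}
    (h : ((matAut : AddAut (ℤ × ℤ)) ^ k) v = v) : v = 0 := by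
  obtain ⟨a, b, c, hbc, hb, hc, hdet, hf⟩ := matAut_pow_form k hk
  obtain ⟨p, q⟩ := v
  rw [hf] at h
  have h1 : a * p + b * q = p := congrArg Prod.fst h
  have h2 : b * p + c * q = q := congrArg Prod.snd h
  have hp : p = 0 := by nlinarith
  have hq : q = 0 := by nlinarith
  simp [hp, hq, Prod.ext_iff]

lemma matAut_zpow_fix {k : ℤ} (hk : k ≠ 0) {v : ℤ × ℤ}
    (h : ((matAut : AddAut (ℤ × ℤ)) ^ k) v = v) : v = 0 := by
  rcases lt_or_gt_of_ne hk with hneg | hpos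
  · have h' : ((matAut : AddAut (ℤ × ℤ)) ^ (-k)) v = v := by
      have := congrArg (fun w => ((matAut : AddAut (ℤ × ℤ)) ^ (-k)) w) h
      rw [show (((matAut : AddAut (ℤ × ℤ)) ^ (-k)) (((matAut : AddAut (ℤ × ℤ)) ^ k) v)) = v by
        rw [← aaut_mul_apply, ← zpow_add]; simp] at this
      exact this.symm
    have hnk : (1 : ℕ) ≤ (-k).toNat := by omega
    have : ((matAut : AddAut (ℤ × ℤ)) ^ ((-k).toNat)) v = v := by
      rwa [← zpow_natCast, Int.toNat_of_nonneg (by omega)]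
    exact matAut_pow_fix hnk this
  · have hnk : (1 : ℕ) ≤ k.toNat := by omega
    have : ((matAut : AddAut (ℤ × ℤ)) ^ (k.toNat)) v = v := by
      rwa [← zpow_natCast, Int.toNat_of_nonneg (by omega)]
    exact matAut_pow_fix hnk this


/-! ### A commutation helper -/

lemma zpow_mul_zpow_mul {M : Type*} [Group M] {a b : M} (h : Commute a b) (p q r s : ℤ) :
    a ^ p * b ^ q * (a ^ r * b ^ s) = a ^ (p + r) * b ^ (q + s) := by
  have hc : b ^ q * a ^ r = a ^ r * b ^ q := (h.symm.zpow_zpow q r).eq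
  calc a ^ p * b ^ q * (a ^ r * b ^ s) = a ^ p * (b ^ q * a ^ r) * b ^ s := by group
    _ = a ^ p * (a ^ r * b ^ q) * b ^ s := by rw [hc]
    _ = a ^ p * a ^ r * (b ^ q * b ^ s) := by group
    _ = a ^ (p + r) * b ^ (q + s) := by rw [← zpow_add, ← zpow_add]

/-! ### The embedding of `Sol` into `Out(A_Γ)` -/

lemma sol_embed (α β γ : MulAut (RAAG Gabc))
    (hAB : α * β = β * α)
    (hconj1 : γ * α * γ⁻¹ = α * α * β)
    (hconj2 : γ * β * γ⁻¹ = α * β)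
    (hRα : Rel α Lα) (hRβ : Rel β Lβ) (hRγ : Rel γ Lγ) :
    ∃ f : Sol →* OutG Gabc, Function.Injective f ∧
      f.range = Subgroup.closure
        {(QuotientGroup.mk α : OutG Gabc), QuotientGroup.mk β, QuotientGroup.mk γ} := by
  have hABc : Commute α β := hAB
  -- the homomorphism on the `ℤ²` part
  let up : Multiplicative (ℤ × ℤ) →* MulAut (RAAG Gabc) :=
  { toFun := fun v => α ^ (toAdd v).1 * β ^ (toAdd v).2
    map_one' := by simp
    map_mul' := fun v w => by
      simp only [toAdd_mul, Prod.fst_add, Prod.snd_add]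
      exact (zpow_mul_zpow_mul hABc _ _ _ _).symm }
  have up_apply : ∀ v : Multiplicative (ℤ × ℤ),
      up v = α ^ (toAdd v).1 * β ^ (toAdd v).2 := fun v => rfl
  let dn : Multiplicative ℤ →* MulAut (RAAG Gabc) := zpowersHom _ γ
  set T : MulAut (Multiplicative (ℤ × ℤ)) := AddEquiv.toMultiplicative matAut with hT
  -- conjugation by `γ` realizes `T`
  have key1 : ∀ v : Multiplicative (ℤ × ℤ), γ * up v * γ⁻¹ = up (T v) := by
    intro v
    have e0 : γ * up v * γ⁻¹ = (MulAut.conj γ) (up v) := rfl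
    have e1 : (MulAut.conj γ) (up v)
        = ((MulAut.conj γ) α) ^ (toAdd v).1 * ((MulAut.conj γ) β) ^ (toAdd v).2 := by
      rw [up_apply, map_mul, map_zpow, map_zpow]
    have e2 : (MulAut.conj γ) α = α * α * β := hconj1
    have e3 : (MulAut.conj γ) β = α * β := hconj2
    have e4 : (α * α * β) ^ (toAdd v).1 = α ^ (2 * (toAdd v).1) * β ^ (toAdd v).1 := by
      have h1 : α * α * β = α ^ (2 : ℤ) * β := by
        rw [show (2 : ℤ) = 1 + 1 from rfl, zpow_add, zpow_one]
      rw [h1, (hABc.zpow_left 2).mul_zpow, ← zpow_mul]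
    have e5 : (α * β) ^ (toAdd v).2 = α ^ (toAdd v).2 * β ^ (toAdd v).2 := by
      have := (hABc.zpow_left 1).mul_zpow (toAdd v).2
      simpa using hABc.mul_zpow (toAdd v).2
    have e6 : toAdd (T v) = (2 * (toAdd v).1 + (toAdd v).2, (toAdd v).1 + (toAdd v).2) := rfl
    rw [e0, e1, e2, e3, e4, e5, zpow_mul_zpow_mul hABc, up_apply, e6]
  have key1' : ∀ v : Multiplicative (ℤ × ℤ), γ⁻¹ * up v * γ = up (T⁻¹ v) := by
    intro v
    have := key1 (T⁻¹ v)
    rw [show T (T⁻¹ v) = v from MulEquiv.apply_symm_apply T v] at this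
    rw [← this]
    group
  have keyk : ∀ k : ℤ, ∀ v : Multiplicative (ℤ × ℤ),
      γ ^ k * up v * γ ^ (-k) = up ((T ^ k) v) := by
    intro k
    induction k using Int.induction_on with
    | zero => intro v; simp
    | succ n ih =>
        intro v
        have h1 : γ ^ ((n : ℤ) + 1) * up v * γ ^ (-((n : ℤ) + 1))
            = γ ^ (n : ℤ) * (γ * up v * γ⁻¹) * γ ^ (-(n : ℤ)) := by group
        rw [h1, key1, ih, zpow_add_one, MulAut.mul_apply]
    | pred n ih =>
        intro v
        have h1 : γ ^ (-(n : ℤ) - 1) * up v * γ ^ (-(-(n : ℤ) - 1))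
            = γ ^ (-(n : ℤ)) * (γ⁻¹ * up v * γ) * γ ^ (-(-(n : ℤ))) := by group
        rw [h1, key1', ih, zpow_sub_one, MulAut.mul_apply]
  have compat : ∀ g : Multiplicative ℤ,
      up.comp (φSol g).toMonoidHom = (MulAut.conj (dn g)).toMonoidHom.comp up := by
    intro g
    refine MonoidHom.ext fun v => ?_
    simp only [MonoidHom.comp_apply, MulEquiv.coe_toMonoidHom, MulAut.conj_apply]
    have h1 : φSol g v = (T ^ (toAdd g)) v := rfl
    have h2 : dn g = γ ^ (toAdd g) := rfl
    rw [h1, h2, ← keyk (toAdd g) v, zpow_neg]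
  let F : Sol →* MulAut (RAAG Gabc) := SemidirectProduct.lift up dn compat
  let f : Sol →* OutG Gabc := (QuotientGroup.mk' (Inn (RAAG Gabc))).comp F
  have hFs : ∀ s : Sol, f s = QuotientGroup.mk
      (α ^ (toAdd s.left).1 * β ^ (toAdd s.left).2 * γ ^ (toAdd s.right)) := by
    intro s
    have h1 : F s = up s.left * dn s.right := rfl
    have h2 : f s = QuotientGroup.mk (F s) := rfl
    rw [h2, h1, up_apply]
    rfl
  refine ⟨f, ?_, ?_⟩
  · -- injectivity
    rw [injective_iff_map_eq_one]
    intro s hs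
    set p : ℤ := (toAdd s.left).1 with hp
    set q : ℤ := (toAdd s.left).2 with hq
    set k : ℤ := toAdd s.right with hk
    rw [hFs] at hs
    have hInn : α ^ p * β ^ q * γ ^ k ∈ Inn (RAAG Gabc) :=
      (QuotientGroup.eq_one_iff _).mp hs
    obtain ⟨g0, hg0⟩ := hInn
    have hfix : ∀ x : RAAG Gabc, πm ((α ^ p * β ^ q * γ ^ k) x) = πm x := by
      intro x
      rw [← hg0]
      have : (MulAut.conj g0) x = g0 * x * g0⁻¹ := rfl
      rw [this, map_mul, map_mul, map_inv, mul_comm (πm g0) (πm x), mul_inv_cancel_right]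
    have hRel : Rel (α ^ p * β ^ q * γ ^ k) (Lα ^ p * Lβ ^ q * Lγ ^ k) :=
      ((hRα.zpow p).mul (hRβ.zpow q)).mul (hRγ.zpow k)
    have hL : ∀ x : RAAG Gabc,
        (Lα ^ p * Lβ ^ q * Lγ ^ k) (toAdd (πm x)) = toAdd (πm x) := by
      intro x
      rw [← hRel x, hfix x]
    have happ : ∀ w : (ℤ × ℤ) × ℤ, (Lα ^ p * Lβ ^ q * Lγ ^ k) w
        = (((((matAut : AddAut (ℤ × ℤ)) ^ k) w.1).1 + p * w.2,
            (((matAut : AddAut (ℤ × ℤ)) ^ k) w.1).2 + q * w.2), w.2) := by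
      intro w
      rw [aaut_mul_apply, aaut_mul_apply, Lγ_zpow, Lβ_zpow, Lα_zpow]
    have h2' := hL (gen Gabc 2)
    rw [πm_gen] at h2'
    have h2'' : (Lα ^ p * Lβ ^ q * Lγ ^ k) (((0 : ℤ), (0 : ℤ)), (1 : ℤ)) = (((0 : ℤ), (0 : ℤ)), (1 : ℤ)) := h2'
    rw [happ] at h2''
    have hz : ((matAut : AddAut (ℤ × ℤ)) ^ k) ((0 : ℤ), (0 : ℤ)) = ((0 : ℤ), (0 : ℤ)) := by
      have : (((0 : ℤ), (0 : ℤ)) : ℤ × ℤ) = 0 := rfl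
      rw [this, map_zero]
    rw [hz] at h2''
    simp only [Prod.mk.injEq] at h2''
    have hp0 : p = 0 := by simpa using h2''.1.1
    have hq0 : q = 0 := by simpa using h2''.1.2
    have h0' := hL (gen Gabc 0)
    rw [πm_gen] at h0'
    have h0'' : (Lα ^ p * Lβ ^ q * Lγ ^ k) (((1 : ℤ), (0 : ℤ)), (0 : ℤ)) = (((1 : ℤ), (0 : ℤ)), (0 : ℤ)) := h0'
    rw [happ] at h0''
    simp only [mul_zero, add_zero, Prod.mk.injEq] at h0''
    have hfixk : ((matAut : AddAut (ℤ × ℤ)) ^ k) ((1 : ℤ), (0 : ℤ)) = ((1 : ℤ), (0 : ℤ)) := by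
      rcases h0'' with ⟨⟨ha, hb⟩, -⟩
      exact Prod.ext ha hb
    have hk0 : k = 0 := by
      by_contra hkne
      have := matAut_zpow_fix hkne hfixk
      rw [Prod.ext_iff] at this
      exact one_ne_zero this.1
    -- conclude `s = 1`
    have hsl : s.left = 1 := by
      have h00 : toAdd s.left = ((0 : ℤ), (0 : ℤ)) := Prod.ext (by rw [← hp]; exact hp0) (by rw [← hq]; exact hq0)
      have := congrArg (Multiplicative.ofAdd) h00
      exact (by simpa using this : s.left = ofAdd ((0 : ℤ), (0 : ℤ))).trans rfl
    have hsr : s.right = 1 := by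
      have := congrArg (Multiplicative.ofAdd) (hk ▸ hk0 : toAdd s.right = 0)
      simpa using this
    rw [← SemidirectProduct.inl_left_mul_inr_right s, hsl, hsr]
    simp
  · -- the range
    apply le_antisymm
    · rintro x ⟨s, rfl⟩
      rw [hFs]
      have hmk : (QuotientGroup.mk
            (α ^ (toAdd s.left).1 * β ^ (toAdd s.left).2 * γ ^ (toAdd s.right)) : OutG Gabc)
          = (QuotientGroup.mk α : OutG Gabc) ^ (toAdd s.left).1
            * (QuotientGroup.mk β : OutG Gabc) ^ (toAdd s.left).2
            * (QuotientGroup.mk γ : OutG Gabc) ^ (toAdd s.right) := by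
        rw [show ((QuotientGroup.mk : MulAut (RAAG Gabc) → OutG Gabc))
            = (QuotientGroup.mk' (Inn (RAAG Gabc)) : MulAut (RAAG Gabc) →* OutG Gabc) from rfl,
          map_mul, map_mul, map_zpow, map_zpow, map_zpow]
      rw [hmk]
      refine mul_mem (mul_mem (zpow_mem (Subgroup.subset_closure ?_) _)
        (zpow_mem (Subgroup.subset_closure ?_) _)) (zpow_mem (Subgroup.subset_closure ?_) _)
      · simp
      · simp
      · simp
    · rw [Subgroup.closure_le]
      intro x hx
      simp only [Set.mem_insert_iff, Set.mem_singleton_iff] at hx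
      rcases hx with rfl | rfl | rfl
      · refine ⟨SemidirectProduct.inl (ofAdd ((1 : ℤ), (0 : ℤ))), ?_⟩
        rw [hFs]
        simp
      · refine ⟨SemidirectProduct.inl (ofAdd ((0 : ℤ), (1 : ℤ))), ?_⟩
        rw [hFs]
        simp
      · refine ⟨SemidirectProduct.inr (ofAdd (1 : ℤ)), ?_⟩
        rw [hFs]
        simp

/-! ### `Sol` is solvable and not virtually nilpotent -/

lemma sol_solvable : IsSolvable Sol :=
  solvable_of_ker_le_range (SemidirectProduct.inl) (SemidirectProduct.rightHom)
    (le_of_eq SemidirectProduct.range_inl_eq_ker_rightHom.symm)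

lemma sol_commutator (w : ℤ × ℤ) (k : ℤ) :
    (⁅(inl (ofAdd w) : Sol), inr (ofAdd k)⁆ : Sol)
      = inl (ofAdd (w - ((matAut : AddAut (ℤ × ℤ)) ^ k) w)) := by
  have h1 : (inr (ofAdd k) : Sol) * inl ((ofAdd w)⁻¹) * inr ((ofAdd k)⁻¹)
      = inl (φSol (ofAdd k) ((ofAdd w)⁻¹)) := (SemidirectProduct.inl_aut _ _).symm
  have h2 : φSol (ofAdd k) ((ofAdd w)⁻¹) = (φSol (ofAdd k) (ofAdd w))⁻¹ := map_inv _ _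
  have h3 : φSol (ofAdd k) (ofAdd w)
      = ofAdd (((matAut : AddAut (ℤ × ℤ)) ^ k) w) := by
    have : φSol (ofAdd k)
        = (AddEquiv.toMultiplicative matAut : MulAut (Multiplicative (ℤ × ℤ))) ^ k := by
      rw [φSol, zpowersHom_apply, toAdd_ofAdd]
    rw [this, T_zpow]
  calc ⁅(inl (ofAdd w) : Sol), inr (ofAdd k)⁆
      = inl (ofAdd w) * ((inr (ofAdd k)) * inl ((ofAdd w)⁻¹) * inr ((ofAdd k)⁻¹)) := by
        rw [commutatorElement_def,
          show ((inl (ofAdd w) : Sol))⁻¹ = inl ((ofAdd w)⁻¹) from (map_inv _ _).symm,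
          show ((inr (ofAdd k) : Sol))⁻¹ = inr ((ofAdd k)⁻¹) from (map_inv _ _).symm,
          mul_assoc (inl (ofAdd w)), mul_assoc]
    _ = inl (ofAdd w) * inl ((φSol (ofAdd k) (ofAdd w))⁻¹) := by rw [h1, h2]
    _ = inl (ofAdd (w - ((matAut : AddAut (ℤ × ℤ)) ^ k) w)) := by
        rw [← map_mul, h3, ← ofAdd_neg, ← ofAdd_add, sub_eq_add_neg]

lemma sol_not_virtnilpotent : ¬ VirtNilpotent Sol := by
  rintro ⟨K, hfi, hnil⟩
  obtain ⟨n1, hn1pos, -, hn1K⟩ :=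
    Subgroup.exists_pow_mem_of_index_ne_zero hfi.index_ne_zero (inr (ofAdd (1 : ℤ)) : Sol)
  obtain ⟨n2, hn2pos, -, hn2K⟩ :=
    Subgroup.exists_pow_mem_of_index_ne_zero hfi.index_ne_zero
      (inl (ofAdd ((1 : ℤ), (0 : ℤ))) : Sol)
  have hgK : (inr (ofAdd (n1 : ℤ)) : Sol) ∈ K := by
    have : (inr (ofAdd (1 : ℤ)) : Sol) ^ n1 = inr (ofAdd (n1 : ℤ)) := by
      rw [← map_pow]
      congr 1
      rw [← ofAdd_nsmul]
      congr 1
      simp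
    rwa [this] at hn1K
  have haK : (inl (ofAdd ((n2 : ℤ), (0 : ℤ))) : Sol) ∈ K := by
    have : (inl (ofAdd ((1 : ℤ), (0 : ℤ))) : Sol) ^ n2 = inl (ofAdd ((n2 : ℤ), (0 : ℤ))) := by
      rw [← map_pow]
      congr 1
      rw [← ofAdd_nsmul]
      congr 1
      simp [Prod.ext_iff]
    rwa [this] at hn2K
  have hkz : (n1 : ℤ) ≠ 0 := by exact_mod_cast Nat.pos_iff_ne_zero.mp hn1pos
  have hw0 : ((n2 : ℤ), (0 : ℤ)) ≠ (0 : ℤ × ℤ) := by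
    intro h
    have h2 := congrArg Prod.fst h
    simp only [Prod.fst_zero] at h2
    have : n2 = 0 := by exact_mod_cast h2
    omega
  set gK : ↥K := ⟨inr (ofAdd (n1 : ℤ)), hgK⟩ with hgKdef
  set aK : ↥K := ⟨inl (ofAdd ((n2 : ℤ), (0 : ℤ))), haK⟩ with haKdef
  let cs : ℕ → ↥K := fun n => (fun z => ⁅z, gK⁆)^[n] aK
  have hcs : ∀ n : ℕ, (∃ w : ℤ × ℤ, w ≠ 0 ∧ ((cs n : ↥K) : Sol) = inl (ofAdd w))
      ∧ cs n ∈ Subgroup.lowerCentralSeries (⊤ : Subgroup ↥K) n := by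
    intro n
    induction n with
    | zero =>
        refine ⟨⟨((n2 : ℤ), (0 : ℤ)), hw0, rfl⟩, ?_⟩
        rw [lowerCentralSeries_zero]
        exact Subgroup.mem_top _
    | succ m ih =>
        obtain ⟨⟨w, hwne, hw⟩, hmem⟩ := ih
        have hstep : cs (m + 1) = ⁅cs m, gK⁆ := Function.iterate_succ_apply' _ _ _
        constructor
        · refine ⟨w - ((matAut : AddAut (ℤ × ℤ)) ^ (n1 : ℤ)) w, ?_, ?_⟩
          · intro hzero
            rw [sub_eq_zero] at hzero
            exact hwne (matAut_zpow_fix hkz hzero.symm)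
          · have hcoe : ((⁅cs m, gK⁆ : ↥K) : Sol) = ⁅((cs m : ↥K) : Sol), (gK : Sol)⁆ := by
              simp [commutatorElement_def]
            rw [hstep, hcoe, hw]
            exact sol_commutator w (n1 : ℤ)
        · rw [hstep, lowerCentralSeries_succ]
          exact Subgroup.commutator_mem_commutator hmem (Subgroup.mem_top _)
  obtain ⟨n, hn⟩ := nilpotent_iff_lowerCentralSeries.mp hnil
  obtain ⟨⟨w, hwne, hw⟩, hmem⟩ := hcs n
  rw [hn, Subgroup.mem_bot] at hmem
  rw [hmem] at hw
  have hw' : (inl (1 : Multiplicative (ℤ × ℤ)) : Sol) = inl (ofAdd w) := by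
    rw [map_one]
    rw [← hw]
    simp
  have h1 : (1 : Multiplicative (ℤ × ℤ)) = Multiplicative.ofAdd w :=
    SemidirectProduct.inl_injective hw'
  exact hwne (by simpa using h1.symm)

end Stmt18Aux

/-- In `A_Γ = ⟨a, b, c | ab = ba⟩`, let `α = τ_{a,c} : c ↦ ca`,
`β = τ_{b,c} : c ↦ cb`, and `γ = τ_{a,b} τ_{b,a}` the composite of `t1 : b ↦ ba` and
`t2 : a ↦ ab`. The subgroup `G` of `Out(A_Γ)` generated by the images of `α, β, γ` is
isomorphic to `ℤ² ⋊ ℤ` (with the `[[2,1],[1,1]]`-action); in particular it is solvable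
and is not virtually nilpotent. -/
theorem out_subgroup_sol (α β t1 t2 : MulAut (RAAG Gabc))
    (hαc : α (gen Gabc 2) = gen Gabc 2 * gen Gabc 0)
    (hαa : α (gen Gabc 0) = gen Gabc 0) (hαb : α (gen Gabc 1) = gen Gabc 1)
    (hβc : β (gen Gabc 2) = gen Gabc 2 * gen Gabc 1)
    (hβa : β (gen Gabc 0) = gen Gabc 0) (hβb : β (gen Gabc 1) = gen Gabc 1)
    (ht1b : t1 (gen Gabc 1) = gen Gabc 1 * gen Gabc 0)
    (ht1a : t1 (gen Gabc 0) = gen Gabc 0) (ht1c : t1 (gen Gabc 2) = gen Gabc 2)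
    (ht2a : t2 (gen Gabc 0) = gen Gabc 0 * gen Gabc 1)
    (ht2b : t2 (gen Gabc 1) = gen Gabc 1) (ht2c : t2 (gen Gabc 2) = gen Gabc 2)
    (GG : Subgroup (OutG Gabc))
    (hGG : GG = Subgroup.closure
      {(QuotientGroup.mk α : OutG Gabc), QuotientGroup.mk β,
        QuotientGroup.mk (t1 * t2)}) :
    Nonempty (↥GG ≃* Sol) ∧ IsSolvable ↥GG ∧ ¬ VirtNilpotent ↥GG := by
  set γ : MulAut (RAAG Gabc) := t1 * t2 with hγdef
  have hγa : γ (gen Gabc 0) = gen Gabc 0 * gen Gabc 1 * gen Gabc 0 := by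
    have h0 : γ (gen Gabc 0) = t1 (t2 (gen Gabc 0)) := rfl
    rw [h0, ht2a, map_mul, ht1a, ht1b, mul_assoc]
  have hγb : γ (gen Gabc 1) = gen Gabc 1 * gen Gabc 0 := by
    have h0 : γ (gen Gabc 1) = t1 (t2 (gen Gabc 1)) := rfl
    rw [h0, ht2b, ht1b]
  have hγc : γ (gen Gabc 2) = gen Gabc 2 := by
    have h0 : γ (gen Gabc 2) = t1 (t2 (gen Gabc 2)) := rfl
    rw [h0, ht2c, ht1c]
  have hAB : α * β = β * α := by
    apply Stmt18Aux.aut_ext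
    intro x
    fin_cases x
    · show α (β (gen Gabc 0)) = β (α (gen Gabc 0))
      simp only [hαa, hβa]
    · show α (β (gen Gabc 1)) = β (α (gen Gabc 1))
      simp only [hαb, hβb]
    · show α (β (gen Gabc 2)) = β (α (gen Gabc 2))
      simp only [hαa, hαb, hαc, hβa, hβb, hβc, map_mul, mul_assoc]
      rw [Stmt18Aux.comm01]
  have hmul1 : γ * α = α * α * β * γ := by
    apply Stmt18Aux.aut_ext
    intro x
    fin_cases x
    · show γ (α (gen Gabc 0)) = α (α (β (γ (gen Gabc 0))))
      simp only [hαa, hαb, hαc, hβa, hβb, hβc, hγa, hγb, hγc, map_mul]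
    · show γ (α (gen Gabc 1)) = α (α (β (γ (gen Gabc 1))))
      simp only [hαa, hαb, hαc, hβa, hβb, hβc, hγa, hγb, hγc, map_mul]
    · show γ (α (gen Gabc 2)) = α (α (β (γ (gen Gabc 2))))
      simp only [hαa, hαb, hαc, hβa, hβb, hβc, hγa, hγb, hγc, map_mul, mul_assoc]
      rw [Stmt18Aux.comm01]
  have hmul2 : γ * β = α * β * γ := by
    apply Stmt18Aux.aut_ext
    intro x
    fin_cases x
    · show γ (β (gen Gabc 0)) = α (β (γ (gen Gabc 0)))
      simp only [hαa, hαb, hαc, hβa, hβb, hβc, hγa, hγb, hγc, map_mul]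
    · show γ (β (gen Gabc 1)) = α (β (γ (gen Gabc 1)))
      simp only [hαa, hαb, hαc, hβa, hβb, hβc, hγa, hγb, hγc, map_mul]
    · show γ (β (gen Gabc 2)) = α (β (γ (gen Gabc 2)))
      simp only [hαa, hαb, hαc, hβa, hβb, hβc, hγa, hγb, hγc, map_mul, mul_assoc]
      rw [Stmt18Aux.comm01]
  have hconj1 : γ * α * γ⁻¹ = α * α * β := by
    rw [hmul1]
    group
  have hconj2 : γ * β * γ⁻¹ = α * β := by
    rw [hmul2]
    group
  have hRα := Stmt18Aux.rel_alpha hαc hαa hαb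
  have hRβ := Stmt18Aux.rel_beta hβc hβa hβb
  have hRγ := Stmt18Aux.rel_gamma hγa hγb hγc
  obtain ⟨f, hinj, hrange⟩ := Stmt18Aux.sol_embed α β γ hAB hconj1 hconj2 hRα hRβ hRγ
  have hGGr : GG = f.range := by rw [hGG, hrange]
  let e : ↥GG ≃* Sol := (MulEquiv.subgroupCongr hGGr).trans (MonoidHom.ofInjective hinj).symm
  refine ⟨⟨e⟩, ?_, ?_⟩
  · haveI : Group.IsSolvable Sol := Stmt18Aux.sol_solvable
    exact solvable_of_solvable_injective (f := (e : ↥GG →* Sol)) e.injective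
  · rintro ⟨K, hfi, hnil⟩
    apply Stmt18Aux.sol_not_virtnilpotent
    refine ⟨K.map (e : ↥GG →* Sol), ⟨?_⟩, ?_⟩
    · rw [Subgroup.map_equiv_eq_comap_symm e K,
        Subgroup.index_comap_of_surjective _ e.symm.surjective]
      exact hfi.index_ne_zero
    · haveI := hnil
      exact nilpotent_of_mulEquiv (e.subgroupMap K)
end

section
/- Let G be the semidirect product ℤ² ⋊ ℤ in which a generator of ℤ acts on ℤ² by the matrix [[2,1],[1,1]]. Then G is solvable, and every finite-index subgroup of G is non-nilpotent; in particular G is not virtually nilpotent. -/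
/-!
`Sol` is an extension of `ℤ` by `ℤ²`, hence solvable. A finite-index subgroup `K` contains
`t = inr (n : ℤ)` and `v = inl w` for some `n > 0` and `w ≠ 0`. The iterated commutators
`⁅⋯⁅v, t⁆⋯, t⁆` lie in the lower central series of `K` and equal `inl ((1 - Mⁿ)ᵏ w)`, where
`M = [[2,1],[1,1]]`. They never vanish because `Mⁿ` fixes no nonzero vector of `ℤ²`: the linear
form `(a, b) ↦ φ a + b` is injective on `ℤ²` (`φ` is irrational) and `M` scales it by `φ² > 1`.
-/

open scoped commutatorElement

theorem MulAut.coe_pow {M : Type*} [Monoid M] (σ : MulAut M) (n : ℕ) : ⇑(σ ^ n) = σ^[n] := by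
  funext x
  induction n generalizing x with
  | zero => rfl
  | succ n ih => rw [pow_succ, MulAut.mul_apply, ih, Function.iterate_succ_apply]

theorem Group.exists_iterate_commutatorElement_eq_one {G : Type*} [Group G]
    [hG : Group.IsNilpotent G] (x t : G) : ∃ n, (fun y => ⁅y, t⁆)^[n] x = 1 := by
  obtain ⟨n, hn⟩ := Subgroup.nilpotent_iff_lowerCentralSeries.mp hG
  have hmem : ∀ k, (fun y => ⁅y, t⁆)^[k] x ∈ (⊤ : Subgroup G).lowerCentralSeries k := by
    intro k
    induction k with
    | zero => exact Subgroup.mem_top x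
    | succ k ih =>
      rw [Function.iterate_succ_apply']
      exact Subgroup.commutator_mem_commutator ih (Subgroup.mem_top t)
  exact ⟨n, by simpa [hn] using hmem n⟩

namespace SemidirectProduct

variable {N G : Type*} [Group N] [Group G] {φ : G →* MulAut N}

theorem commutatorElement_inl_inr (v : N) (g : G) :
    ⁅(inl v : N ⋊[φ] G), (inr g : N ⋊[φ] G)⁆ = inl (v * (φ g v)⁻¹) := by
  rw [commutatorElement_def, mul_assoc, mul_assoc, ← mul_assoc (inr g), ← map_inv, ← map_inv,
    ← inl_aut, ← map_mul, map_inv]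

theorem iterate_commutatorElement_inl_inr (v : N) (g : G) (n : ℕ) :
    (fun y => ⁅y, inr g⁆)^[n] (inl v : N ⋊[φ] G) = inl ((fun w => w * (φ g w)⁻¹)^[n] v) :=
  (Function.Semiconj.iterate_right (fun w => (commutatorElement_inl_inr w g).symm) n v).symm

theorem eq_one_of_inl_mem_of_inr_mem {K : Subgroup (N ⋊[φ] G)} [Group.IsNilpotent K] {v : N}
    {g : G} (hv : inl v ∈ K) (hg : inr g ∈ K) (hφg : ∀ w, φ g w = w → w = 1) : v = 1 := by
  obtain ⟨n, hn⟩ := Group.exists_iterate_commutatorElement_eq_one (⟨inl v, hv⟩ : K) ⟨inr g, hg⟩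
  have hcoe := Function.Semiconj.iterate_right (f := ((↑) : K → N ⋊[φ] G))
    (ga := fun y => ⁅y, ⟨inr g, hg⟩⁆) (gb := fun y => ⁅y, inr g⁆) (fun _ => rfl) n ⟨inl v, hv⟩
  rw [hn, iterate_commutatorElement_inl_inr] at hcoe
  have hiter : (fun w => w * (φ g w)⁻¹)^[n] v = 1 := inl_injective hcoe.symm
  clear hcoe hn hv
  induction n generalizing v with
  | zero => exact hiter
  | succ n ih =>
    rw [Function.iterate_succ_apply] at hiter
    exact hφg v (mul_inv_eq_one.mp (ih hiter)).symm

end SemidirectProduct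

section GoldenFunctional

open Real
open scoped goldenRatio

/-- A left eigenvector of `[[2,1],[1,1]]` for its expanding eigenvalue `φ²`. -/
noncomputable def goldenFunctional (p : ℤ × ℤ) : ℝ := φ * p.1 + p.2

theorem goldenFunctional_matAut (p : ℤ × ℤ) :
    goldenFunctional (matAut p) = φ ^ 2 * goldenFunctional p := by
  simp only [goldenFunctional, matAut, AddEquiv.coe_mk, Equiv.coe_fn_mk]
  push_cast
  linear_combination -((φ + 1) * p.1 + p.2) * goldenRatio_sq

theorem eq_zero_of_goldenFunctional_eq_zero {p : ℤ × ℤ} (h : goldenFunctional p = 0) : p = 0 := by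
  have hp₁ : p.1 = 0 := by
    by_contra hp₁
    exact ((goldenRatio_irrational.mul_intCast hp₁).add_intCast p.2).ne_zero h
  have hp₂ : p.2 = 0 := by
    simpa [goldenFunctional, hp₁] using h
  exact Prod.ext hp₁ hp₂

theorem eq_zero_of_matAut_iterate_eq_self {n : ℕ} (hn : n ≠ 0) {p : ℤ × ℤ}
    (h : matAut^[n] p = p) : p = 0 := by
  have hL : goldenFunctional (matAut^[n] p) = (φ ^ 2) ^ n * goldenFunctional p := by
    have := Function.Semiconj.iterate_right (gb := fun x => φ ^ 2 * x) goldenFunctional_matAut n p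
    rwa [mul_left_iterate] at this
  have hpow : (φ ^ 2) ^ n ≠ 1 := (one_lt_pow₀ (one_lt_pow₀ one_lt_goldenRatio two_ne_zero) hn).ne'
  rw [h] at hL
  apply eq_zero_of_goldenFunctional_eq_zero
  have : ((φ ^ 2) ^ n - 1) * goldenFunctional p = 0 := by linarith
  exact (mul_eq_zero.mp this).resolve_left (sub_ne_zero.mpr hpow)

end GoldenFunctional

theorem eq_one_of_φSol_ofAdd_one_pow_apply_eq_self {n : ℕ} (hn : n ≠ 0)
    {w : Multiplicative (ℤ × ℤ)} (h : φSol (Multiplicative.ofAdd 1 ^ n) w = w) : w = 1 := by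
  have hgen : φSol (Multiplicative.ofAdd 1) = AddEquiv.toMultiplicative matAut := by
    rw [φSol, zpowersHom_apply, toAdd_ofAdd, zpow_one]
  rw [map_pow, hgen, MulAut.coe_pow] at h
  have hiter := Function.Semiconj.iterate_right (f := Multiplicative.toAdd)
    (ga := AddEquiv.toMultiplicative matAut) (gb := matAut) (fun _ => rfl) n w
  rw [h] at hiter
  exact toAdd_eq_zero.mp (eq_zero_of_matAut_iterate_eq_self hn hiter.symm)

open SemidirectProduct in
theorem Sol.not_isNilpotent_of_finiteIndex (K : Subgroup Sol) [K.FiniteIndex] :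
    ¬ Group.IsNilpotent K := by
  intro hK
  obtain ⟨n, hn, -, hnK⟩ := K.exists_pow_mem_of_index_ne_zero Subgroup.FiniteIndex.index_ne_zero
    (inr (Multiplicative.ofAdd 1) : Sol)
  obtain ⟨k, hk, -, hkK⟩ := K.exists_pow_mem_of_index_ne_zero Subgroup.FiniteIndex.index_ne_zero
    (inl (Multiplicative.ofAdd (1, 0)) : Sol)
  rw [← map_pow] at hnK hkK
  have := eq_one_of_inl_mem_of_inr_mem hkK hnK
    (fun _ => eq_one_of_φSol_ofAdd_one_pow_apply_eq_self hn.ne')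
  exact hk.ne' (by simpa using this)

/-- The group `ℤ² ⋊ ℤ` with the action of `[[2,1],[1,1]]` is solvable,
every finite-index subgroup of it is non-nilpotent, and in particular it is not
virtually nilpotent. -/
theorem sol_solvable_not_virtNilpotent :
    IsSolvable Sol ∧ (∀ K : Subgroup Sol, K.FiniteIndex → ¬ Group.IsNilpotent ↥K) ∧
      ¬ ∃ K : Subgroup Sol, K.FiniteIndex ∧ Group.IsNilpotent ↥K := by
  refine ⟨Group.isSolvable_of_ker_le_range SemidirectProduct.inl SemidirectProduct.rightHom
    SemidirectProduct.range_inl_eq_ker_rightHom.ge,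
    fun K _ => Sol.not_isNilpotent_of_finiteIndex K, ?_⟩
  rintro ⟨K, hK, hnil⟩
  exact Sol.not_isNilpotent_of_finiteIndex K hnil
end
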